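/- Under polynomial eigenvalue decay ρₖ ≤ Ck^{-α} (α > 1) and independent zero-mean noise with variance ≤ σ², the Tikhonov solution x_λ and B = (W^{-1/2}AᵀAW^{-1/2})^{1/4}W^{1/2} satisfy 𝔼[(1/n)‖B(x_λ − x*)‖²] ≤ Cλ^{1/2}(1/n)‖x*‖_W² + Cσ²/(nλ^{1/2+1/α}). -/

import Mathlib

/-!
In a `W`-orthonormal eigenbasis `ψ_k` of the pencil `(AᵀA, W)`, the Gram matrix of
`B = Q W^{1/2}` maps `ψ_k` to `√ρ_k W ψ_k`, so `‖B v‖² = ∑ √ρ_k c_k(v)²` with `c_k(v) = ψ_kᵀ W v`.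
The normal equations of the Tikhonov problem give
`c_k(x_λ - x*) = (⟨Aψ_k, e⟩ - λ c_k(x*)) / (ρ_k + λ)`, and pairwise independence gives
`𝔼 (⟨Aψ_k, e⟩ - a)² ≤ σ² ρ_k + a²`. The bias weights satisfy `√ρ λ² / (ρ + λ)² ≤ √λ / 2` and
are summed against `∑ c_k(x*)² = ‖x*‖_W²`. The variance sum `∑ √ρ_k ρ_k / (ρ_k + λ)²` is at most
`λ^{-1/2} ∑ min(1, (ρ_k/λ)^{3/2})`; under the decay `ρ_k ≤ C₀ (k+1)^{-α}` the terms with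
`k < (C₀/λ)^{1/α}` are at most `1` and the others are dominated by `∫ x^{-3α/2}`, which gives
`λ^{-1/2-1/α}`.
-/

open Matrix MeasureTheory ProbabilityTheory

theorem sum_Ico_rpow_neg_le {β : ℝ} (hβ : 1 < β) (m n : ℕ) :
    ∑ k ∈ Finset.Ico m n, ((k : ℝ) + 1) ^ (-β) ≤ 2 ^ β / (β - 1) * ((m : ℝ) + 1) ^ (1 - β) := by
  rcases lt_or_ge n m with hnm | hmn
  · rw [Finset.Ico_eq_empty_of_le hnm.le, Finset.sum_empty]
    positivity
  have hanti : AntitoneOn (fun x : ℝ => (x + 1) ^ (-β)) (Set.Icc m n) := by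
    intro x hx y _ hxy
    exact Real.rpow_le_rpow_of_nonpos (by linarith [hx.1, (Nat.cast_nonneg m : (0 : ℝ) ≤ m)])
      (by linarith) (by linarith)
  have hintegral : ∫ x in (m : ℝ)..n, (x + 1) ^ (-β)
      = (((n : ℝ) + 1) ^ (1 - β) - ((m : ℝ) + 1) ^ (1 - β)) / (1 - β) := by
    rw [intervalIntegral.integral_comp_add_right (fun x => x ^ (-β)), integral_rpow]
    · ring_nf
    · refine Or.inr ⟨by linarith, fun h => ?_⟩
      rw [Set.mem_uIcc] at h
      rcases h with h | h <;> linarith [h.1, (Nat.cast_nonneg m : (0 : ℝ) ≤ m),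
        (Nat.cast_nonneg n : (0 : ℝ) ≤ n)]
  -- the integral comparison bounds `(k + 2) ^ (-β)`, which is at least `2 ^ (-β) (k + 1) ^ (-β)`
  have hshift : ∀ k : ℕ, ((k : ℝ) + 1) ^ (-β) ≤ 2 ^ β * (((k + 1 : ℕ) : ℝ) + 1) ^ (-β) := by
    intro k
    have hle : ((k + 1 : ℕ) + 1 : ℝ) / 2 ≤ (k : ℝ) + 1 := by push_cast; linarith
    calc ((k : ℝ) + 1) ^ (-β) ≤ (((k + 1 : ℕ) + 1 : ℝ) / 2) ^ (-β) :=
          Real.rpow_le_rpow_of_nonpos (by positivity) hle (by linarith)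
      _ = 2 ^ β * (((k + 1 : ℕ) : ℝ) + 1) ^ (-β) := by
          rw [Real.div_rpow (by positivity) (by norm_num),
            Real.rpow_neg (by norm_num : (0 : ℝ) ≤ 2)]
          field_simp
  calc ∑ k ∈ Finset.Ico m n, ((k : ℝ) + 1) ^ (-β)
      ≤ ∑ k ∈ Finset.Ico m n, 2 ^ β * (((k + 1 : ℕ) : ℝ) + 1) ^ (-β) :=
        Finset.sum_le_sum fun k _ => hshift k
    _ = 2 ^ β * ∑ k ∈ Finset.Ico m n, (((k + 1 : ℕ) : ℝ) + 1) ^ (-β) := by rw [Finset.mul_sum]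
    _ ≤ 2 ^ β * ∫ x in (m : ℝ)..n, (x + 1) ^ (-β) := by
        gcongr
        exact hanti.sum_le_integral_Ico hmn
    _ ≤ 2 ^ β / (β - 1) * ((m : ℝ) + 1) ^ (1 - β) := by
        have hb1 : 0 < β - 1 := by linarith
        have ha : 0 ≤ ((n : ℝ) + 1) ^ (1 - β) := by positivity
        rw [hintegral, ← neg_div_neg_eq, neg_sub, neg_sub, div_mul_eq_mul_div, mul_div_assoc]
        gcongr
        linarith

theorem sum_range_min_one_rpow_le {β T : ℝ} (hβ : 1 < β) (hT : 0 < T) (n : ℕ) :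
    ∑ k ∈ Finset.range n, min 1 (T ^ β * ((k : ℝ) + 1) ^ (-β)) ≤ (1 + 2 ^ β / (β - 1)) * T := by
  set m := ⌊T⌋₊
  have hmT : (m : ℝ) ≤ T := Nat.floor_le hT.le
  have hTm : T ≤ (m : ℝ) + 1 := (Nat.lt_floor_add_one T).le
  have htail : T ^ β * ((m : ℝ) + 1) ^ (1 - β) ≤ T := by
    calc T ^ β * ((m : ℝ) + 1) ^ (1 - β) ≤ T ^ β * T ^ (1 - β) :=
          mul_le_mul_of_nonneg_left (Real.rpow_le_rpow_of_nonpos hT hTm (by linarith))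
            (by positivity)
      _ = T := by rw [← Real.rpow_add hT]; simp
  calc ∑ k ∈ Finset.range n, min 1 (T ^ β * ((k : ℝ) + 1) ^ (-β))
      ≤ ∑ k ∈ Finset.range (m + n), min 1 (T ^ β * ((k : ℝ) + 1) ^ (-β)) :=
        Finset.sum_le_sum_of_subset_of_nonneg (Finset.range_subset_range.2 (by omega))
          fun _ _ _ => by positivity
    _ = ∑ k ∈ Finset.range m, min 1 (T ^ β * ((k : ℝ) + 1) ^ (-β))
        + ∑ k ∈ Finset.Ico m (m + n), min 1 (T ^ β * ((k : ℝ) + 1) ^ (-β)) :=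
        (Finset.sum_range_add_sum_Ico _ (by omega)).symm
    _ ≤ ∑ k ∈ Finset.range m, (1 : ℝ)
        + ∑ k ∈ Finset.Ico m (m + n), T ^ β * ((k : ℝ) + 1) ^ (-β) := by
        gcongr <;> simp
    _ ≤ m + T ^ β * (2 ^ β / (β - 1) * ((m : ℝ) + 1) ^ (1 - β)) := by
        rw [← Finset.mul_sum]
        gcongr
        · simp
        · exact sum_Ico_rpow_neg_le hβ m (m + n)
    _ = m + 2 ^ β / (β - 1) * (T ^ β * ((m : ℝ) + 1) ^ (1 - β)) := by ring
    _ ≤ T + 2 ^ β / (β - 1) * T := by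
        have : 0 ≤ 2 ^ β / (β - 1) := div_nonneg (by positivity) (by linarith)
        gcongr
    _ = (1 + 2 ^ β / (β - 1)) * T := by ring

theorem sum_min_one_div_rpow_le {n : ℕ} {α p C₀ lam : ℝ} (hα : 0 < α) (hαp : 1 < α * p)
    (hC₀ : 0 < C₀) (hlam : 0 < lam) {ρ : Fin n → ℝ} (hρ : ∀ k, 0 ≤ ρ k)
    (hdecay : ∀ k : Fin n, ρ k ≤ C₀ * ((k : ℝ) + 1) ^ (-α)) :
    ∑ k, min 1 ((ρ k / lam) ^ p) ≤ (1 + 2 ^ (α * p) / (α * p - 1)) * (C₀ / lam) ^ (1 / α) := by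
  have hp : 0 ≤ p := by
    by_contra! h
    nlinarith
  set T := (C₀ / lam) ^ (1 / α)
  have hT : T ^ (α * p) = (C₀ / lam) ^ p := by
    rw [← Real.rpow_mul (by positivity)]
    field_simp
  have hterm : ∀ k : Fin n, (ρ k / lam) ^ p ≤ T ^ (α * p) * ((k : ℝ) + 1) ^ (-(α * p)) := by
    intro k
    calc (ρ k / lam) ^ p ≤ (C₀ / lam * ((k : ℝ) + 1) ^ (-α)) ^ p := by
          gcongr
          · exact div_nonneg (hρ k) hlam.le
          · rw [div_mul_eq_mul_div]
            exact div_le_div_of_nonneg_right (hdecay k) hlam.le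
      _ = T ^ (α * p) * ((k : ℝ) + 1) ^ (-(α * p)) := by
          rw [Real.mul_rpow (by positivity) (by positivity), ← Real.rpow_mul (by positivity),
            hT, neg_mul]
  calc ∑ k, min 1 ((ρ k / lam) ^ p)
      ≤ ∑ k : Fin n, min 1 (T ^ (α * p) * ((k : ℝ) + 1) ^ (-(α * p))) :=
        Finset.sum_le_sum fun k _ => min_le_min_left 1 (hterm k)
    _ = ∑ k ∈ Finset.range n, min 1 (T ^ (α * p) * ((k : ℝ) + 1) ^ (-(α * p))) :=
        Fin.sum_univ_eq_sum_range
          (fun k : ℕ => min 1 (T ^ (α * p) * ((k : ℝ) + 1) ^ (-(α * p)))) n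
    _ ≤ (1 + 2 ^ (α * p) / (α * p - 1)) * T := sum_range_min_one_rpow_le hαp (by positivity) n

theorem sqrt_mul_div_add_sq_le {ρ lam : ℝ} (hρ : 0 ≤ ρ) (hlam : 0 < lam) :
    √ρ * ρ / (ρ + lam) ^ 2 ≤ (√lam)⁻¹ * min 1 ((ρ / lam) ^ (3 / 2 : ℝ)) := by
  have hsl : 0 < √lam := Real.sqrt_pos.2 hlam
  have amgm : 2 * (√ρ * √lam) ≤ ρ + lam := by
    nlinarith [sq_nonneg (√ρ - √lam), Real.sq_sqrt hρ, Real.sq_sqrt hlam.le]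
  rw [mul_min_of_nonneg _ _ (inv_nonneg.2 hsl.le), mul_one]
  refine le_min ?_ ?_
  · rw [div_le_iff₀ (by positivity), ← div_eq_inv_mul, le_div_iff₀ hsl]
    nlinarith [mul_nonneg (Real.sqrt_nonneg ρ) hρ, mul_nonneg hsl.le (Real.sqrt_nonneg ρ)]
  · have h32 : (√lam)⁻¹ * (ρ / lam) ^ (3 / 2 : ℝ) = √ρ * ρ / lam ^ 2 := by
      rw [show (3 / 2 : ℝ) = 1 + 1 / 2 by norm_num, Real.rpow_add' (by positivity) (by norm_num),
        Real.rpow_one, ← Real.sqrt_eq_rpow, Real.sqrt_div' _ hlam.le]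
      field_simp
      rw [Real.sq_sqrt hlam.le]
      ring
    rw [h32]
    gcongr
    linarith

theorem sqrt_mul_sq_div_add_sq_le {ρ lam : ℝ} (hρ : 0 ≤ ρ) (hlam : 0 < lam) :
    √ρ * lam ^ 2 / (ρ + lam) ^ 2 ≤ √lam / 2 := by
  have amgm : 2 * (√ρ * √lam) ≤ ρ + lam := by
    nlinarith [sq_nonneg (√ρ - √lam), Real.sq_sqrt hρ, Real.sq_sqrt hlam.le]
  have hll : √lam * √lam = lam := Real.mul_self_sqrt hlam.le
  rw [div_le_div_iff₀ (by positivity) two_pos]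
  calc √ρ * lam ^ 2 * 2 = 2 * (√ρ * √lam) * (√lam * lam) := by
        linear_combination (-(2 * √ρ * lam)) * hll
    _ ≤ (ρ + lam) * (√lam * (ρ + lam)) := by
        gcongr
        linarith
    _ = √lam * (ρ + lam) ^ 2 := by ring

theorem sum_sqrt_mul_div_add_sq_le {n : ℕ} {α C₀ lam : ℝ} (hα : 1 < α * (3 / 2)) (hC₀ : 0 < C₀)
    (hlam : 0 < lam) {ρ : Fin n → ℝ} (hρ : ∀ k, 0 ≤ ρ k)
    (hdecay : ∀ k : Fin n, ρ k ≤ C₀ * ((k : ℝ) + 1) ^ (-α)) :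
    ∑ k, √(ρ k) * ρ k / (ρ k + lam) ^ 2
      ≤ (1 + 2 ^ (α * (3 / 2)) / (α * (3 / 2) - 1)) * C₀ ^ (1 / α) / lam ^ (1 / 2 + 1 / α) := by
  have hα0 : 0 < α := by linarith
  calc ∑ k, √(ρ k) * ρ k / (ρ k + lam) ^ 2
      ≤ ∑ k, (√lam)⁻¹ * min 1 ((ρ k / lam) ^ (3 / 2 : ℝ)) :=
        Finset.sum_le_sum fun k _ => sqrt_mul_div_add_sq_le (hρ k) hlam
    _ ≤ (√lam)⁻¹ * ((1 + 2 ^ (α * (3 / 2)) / (α * (3 / 2) - 1)) * (C₀ / lam) ^ (1 / α)) := by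
        rw [← Finset.mul_sum]
        gcongr
        exact sum_min_one_div_rpow_le hα0 hα hC₀ hlam hρ hdecay
    _ = _ := by
        rw [Real.div_rpow hC₀.le hlam.le, Real.rpow_add hlam, Real.sqrt_eq_rpow]
        field_simp

theorem sum_bias_variance_le {n : ℕ} {α C₀ lam : ℝ} (hα : 1 < α * (3 / 2)) (hC₀ : 0 < C₀)
    (hlam : 0 < lam) {ρ : Fin n → ℝ} (hρ : ∀ k, 0 ≤ ρ k)
    (hdecay : ∀ k : Fin n, ρ k ≤ C₀ * ((k : ℝ) + 1) ^ (-α)) (σ : ℝ) (c : Fin n → ℝ) :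
    ∑ k, √(ρ k) / (ρ k + lam) ^ 2 * (σ ^ 2 * ρ k + (lam * c k) ^ 2)
      ≤ σ ^ 2 * ((1 + 2 ^ (α * (3 / 2)) / (α * (3 / 2) - 1)) * C₀ ^ (1 / α)
          / lam ^ (1 / 2 + 1 / α)) + √lam / 2 * ∑ k, c k ^ 2 := by
  have hsplit : ∀ k, √(ρ k) / (ρ k + lam) ^ 2 * (σ ^ 2 * ρ k + (lam * c k) ^ 2)
      = σ ^ 2 * (√(ρ k) * ρ k / (ρ k + lam) ^ 2)
        + √(ρ k) * lam ^ 2 / (ρ k + lam) ^ 2 * c k ^ 2 :=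
    fun k => by ring
  simp only [hsplit, Finset.sum_add_distrib, ← Finset.mul_sum]
  rw [Finset.mul_sum _ _ (√lam / 2)]
  gcongr _ * ?_ + ∑ k, ?_ * _ with k
  · exact sum_sqrt_mul_div_add_sq_le hα hC₀ hlam hρ hdecay
  · exact sqrt_mul_sq_div_add_sq_le (hρ k) hlam

section LinearAlgebra

variable {l m ι R : Type*} [Fintype l] [Fintype m] [Fintype ι] [CommRing R]

theorem Matrix.IsSymm.dotProduct_mulVec_comm {M : Matrix m m R} (hM : M.IsSymm) (v w : m → R) :
    v ⬝ᵥ M *ᵥ w = w ⬝ᵥ M *ᵥ v := by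
  rw [dotProduct_mulVec, ← mulVec_transpose, hM.eq, dotProduct_comm]

theorem Matrix.mulVec_dotProduct_mulVec (B : Matrix l m R) (v w : m → R) :
    B *ᵥ v ⬝ᵥ B *ᵥ w = v ⬝ᵥ (Bᵀ * B) *ᵥ w := by
  rw [← mulVec_mulVec, dotProduct_mulVec v, vecMul_transpose]

theorem dotProduct_mulVec_eq_sum_of_eigen {S W : Matrix m m R} (hW : W.IsSymm) {ψ : ι → m → R}
    {μ : ι → R} (hS : ∀ k, S *ᵥ ψ k = μ k • W *ᵥ ψ k) {v : m → R}
    (hv : v = ∑ k, (ψ k ⬝ᵥ W *ᵥ v) • ψ k) :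
    v ⬝ᵥ S *ᵥ v = ∑ k, μ k * (ψ k ⬝ᵥ W *ᵥ v) ^ 2 := by
  calc v ⬝ᵥ S *ᵥ v = v ⬝ᵥ S *ᵥ ∑ k, (ψ k ⬝ᵥ W *ᵥ v) • ψ k :=
        congrArg (fun w => v ⬝ᵥ S *ᵥ w) hv
    _ = ∑ k, μ k * (ψ k ⬝ᵥ W *ᵥ v) ^ 2 := by
      simp only [mulVec_sum, dotProduct_sum, mulVec_smul, dotProduct_smul, hS,
        hW.dotProduct_mulVec_comm v, smul_eq_mul]
      exact Finset.sum_congr rfl fun k _ => by ring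

theorem dotProduct_mulVec_self_eq_sum_sq {W : Matrix m m R} (hW : W.IsSymm) {ψ : ι → m → R}
    {v : m → R} (hv : v = ∑ k, (ψ k ⬝ᵥ W *ᵥ v) • ψ k) :
    v ⬝ᵥ W *ᵥ v = ∑ k, (ψ k ⬝ᵥ W *ᵥ v) ^ 2 := by
  simpa using dotProduct_mulVec_eq_sum_of_eigen hW (μ := 1) (fun k => (one_smul R _).symm) hv

end LinearAlgebra

section PosSemidef

variable {m : Type*} [Fintype m]

omit [Fintype m] in
theorem Matrix.PosSemidef.isSymm {M : Matrix m m ℝ} (hM : M.PosSemidef) : M.IsSymm :=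
  isHermitian_iff_isSymm.1 hM.isHermitian

theorem Matrix.PosSemidef.mulVec_eq_smul_of_mul_self_mulVec {M : Matrix m m ℝ}
    (hM : M.PosSemidef) {s : ℝ} (hs : 0 ≤ s) {u : m → ℝ} (h : (M * M) *ᵥ u = s ^ 2 • u) :
    M *ᵥ u = s • u := by
  set w := M *ᵥ u - s • u
  have hMw : M *ᵥ w = -s • w := by
    simp only [w, mulVec_sub, mulVec_smul, mulVec_mulVec, h, smul_sub, smul_smul]
    module
  have hnorm : w ⬝ᵥ w = -2 * s * (w ⬝ᵥ u) := by
    calc w ⬝ᵥ w = w ⬝ᵥ M *ᵥ u - s * (w ⬝ᵥ u) := by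
          simp only [w, dotProduct_sub, dotProduct_smul, smul_eq_mul]
      _ = -2 * s * (w ⬝ᵥ u) := by
          rw [hM.isSymm.dotProduct_mulVec_comm, hMw, dotProduct_smul, smul_eq_mul,
            dotProduct_comm u]
          ring
  have hpos : 0 ≤ -s * (w ⬝ᵥ w) := by
    have := hM.dotProduct_mulVec_nonneg w
    rwa [star_trivial, hMw, dotProduct_smul, smul_eq_mul] at this
  have hs_w : s * (w ⬝ᵥ w) = 0 :=
    le_antisymm (by linarith) (mul_nonneg hs (dotProduct_self_star_nonneg w))
  have : w ⬝ᵥ w = 0 := by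
    have : (w ⬝ᵥ w) * (w ⬝ᵥ w) = 0 := by
      linear_combination (w ⬝ᵥ w) * hnorm - 2 * (w ⬝ᵥ u) * hs_w
    exact mul_self_eq_zero.1 this
  exact sub_eq_zero.1 (dotProduct_self_eq_zero.1 this)

end PosSemidef

section Tikhonov

variable {l m ι : Type*} [Fintype l] [Fintype m] [Fintype ι] [DecidableEq m]

def tikhonov (A : Matrix l m ℝ) (W : Matrix m m ℝ) (b : l → ℝ) (lam : ℝ) (x : m → ℝ) : ℝ :=
  (A *ᵥ x - b) ⬝ᵥ (A *ᵥ x - b) + lam * (x ⬝ᵥ W *ᵥ x)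

omit [DecidableEq m] in
theorem tikhonov_directional_deriv_eq_zero {A : Matrix l m ℝ} {W : Matrix m m ℝ} (hW : W.IsSymm)
    {b : l → ℝ} {lam : ℝ} {x : m → ℝ} (hmin : ∀ y, tikhonov A W b lam x ≤ tikhonov A W b lam y)
    (d : m → ℝ) :
    A *ᵥ d ⬝ᵥ (A *ᵥ x - b) + lam * (d ⬝ᵥ W *ᵥ x) = 0 := by
  set L := A *ᵥ d ⬝ᵥ (A *ᵥ x - b) + lam * (d ⬝ᵥ W *ᵥ x)
  have hquad :
      ∀ t, 0 ≤ (A *ᵥ d ⬝ᵥ A *ᵥ d + lam * (d ⬝ᵥ W *ᵥ d)) * (t * t) + 2 * L * t + 0 := by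
    intro t
    have h := hmin (x + t • d)
    simp only [tikhonov] at h
    have hres : A *ᵥ (x + t • d) - b = (A *ᵥ x - b) + t • A *ᵥ d := by
      rw [mulVec_add, mulVec_smul]
      abel
    rw [hres] at h
    simp only [mulVec_add, mulVec_smul, add_dotProduct, dotProduct_add, smul_dotProduct,
      dotProduct_smul, smul_eq_mul, hW.dotProduct_mulVec_comm x d,
      dotProduct_comm (A *ᵥ x - b)] at h
    linarith
  have hdisc := discrim_le_zero hquad
  rw [discrim] at hdisc
  nlinarith [sq_nonneg L]

omit [DecidableEq m] in
theorem mul_coeff_sub_eq_of_tikhonov_min {A : Matrix l m ℝ} {W : Matrix m m ℝ} (hW : W.IsSymm)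
    {ρ : ℝ} {ψ : m → ℝ} (heig : (Aᵀ * A) *ᵥ ψ = ρ • W *ᵥ ψ) {lam : ℝ} {xstar x : m → ℝ}
    {ε : l → ℝ}
    (hmin : ∀ y, tikhonov A W (A *ᵥ xstar + ε) lam x ≤ tikhonov A W (A *ᵥ xstar + ε) lam y) :
    (ρ + lam) * (ψ ⬝ᵥ W *ᵥ (x - xstar)) = A *ᵥ ψ ⬝ᵥ ε - lam * (ψ ⬝ᵥ W *ᵥ xstar) := by
  have hsymm : (Aᵀ * A).IsSymm := by rw [IsSymm, transpose_mul, transpose_transpose]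
  have hAψ : ∀ v, A *ᵥ ψ ⬝ᵥ A *ᵥ v = ρ * (ψ ⬝ᵥ W *ᵥ v) := fun v => by
    rw [mulVec_dotProduct_mulVec, hsymm.dotProduct_mulVec_comm, heig,
      dotProduct_smul, smul_eq_mul, hW.dotProduct_mulVec_comm]
  have h := tikhonov_directional_deriv_eq_zero hW hmin ψ
  rw [dotProduct_sub, dotProduct_add, hAψ, hAψ] at h
  rw [mulVec_sub, dotProduct_sub]
  linear_combination h

theorem transpose_mul_self_mulVec_eq_sqrt_smul {A : Matrix l m ℝ} {W Wsqrt Q : Matrix m m ℝ}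
    (hWs : Wsqrt.PosDef) (hWs2 : Wsqrt * Wsqrt = W) (hQ : Q.PosSemidef)
    (hQ4 : Q ^ 4 = Wsqrt⁻¹ * (Aᵀ * A) * Wsqrt⁻¹) {ρ : ℝ} (hρ : 0 ≤ ρ) {ψ : m → ℝ}
    (heig : (Aᵀ * A) *ᵥ ψ = ρ • W *ᵥ ψ) :
    ((Q * Wsqrt)ᵀ * (Q * Wsqrt)) *ᵥ ψ = √ρ • W *ᵥ ψ := by
  have hinv : Wsqrt⁻¹ * Wsqrt = 1 := nonsing_inv_mul _ ((isUnit_iff_isUnit_det _).1 hWs.isUnit)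
  set u := Wsqrt *ᵥ ψ
  have hQ4u : (Q ^ 2 * Q ^ 2) *ᵥ u = √ρ ^ 2 • u := by
    calc (Q ^ 2 * Q ^ 2) *ᵥ u = Wsqrt⁻¹ *ᵥ (Aᵀ * A) *ᵥ (Wsqrt⁻¹ * Wsqrt) *ᵥ ψ := by
          rw [← pow_add, hQ4]
          simp only [u, mulVec_mulVec, Matrix.mul_assoc]
      _ = ρ • Wsqrt⁻¹ *ᵥ Wsqrt *ᵥ Wsqrt *ᵥ ψ := by
          rw [hinv, one_mulVec, heig, mulVec_smul, ← hWs2, ← mulVec_mulVec]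
      _ = √ρ ^ 2 • u := by
          rw [Real.sq_sqrt hρ, mulVec_mulVec, hinv, one_mulVec]
  have hgram : (Q * Wsqrt)ᵀ * (Q * Wsqrt) = Wsqrt * (Q ^ 2 * Wsqrt) := by
    rw [transpose_mul, hQ.isSymm.eq, hWs.posSemidef.isSymm.eq, sq]
    simp only [Matrix.mul_assoc]
  rw [hgram, ← mulVec_mulVec, ← mulVec_mulVec,
    (hQ.pow 2).mulVec_eq_smul_of_mul_self_mulVec (Real.sqrt_nonneg ρ) hQ4u, mulVec_smul,
    mulVec_mulVec, hWs2]

theorem weak_norm_sq_sub_eq_of_tikhonov_min {A : Matrix l m ℝ} {W Wsqrt Q : Matrix m m ℝ}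
    (hWs : Wsqrt.PosDef) (hWs2 : Wsqrt * Wsqrt = W) (hQ : Q.PosSemidef)
    (hQ4 : Q ^ 4 = Wsqrt⁻¹ * (Aᵀ * A) * Wsqrt⁻¹) {ρ : ι → ℝ} {ψ : ι → m → ℝ} (hρ : ∀ k, 0 ≤ ρ k)
    (heig : ∀ k, (Aᵀ * A) *ᵥ ψ k = ρ k • W *ᵥ ψ k) (hcomp : ∀ v, v = ∑ k, (ψ k ⬝ᵥ W *ᵥ v) • ψ k)
    {lam : ℝ} (hlam : 0 < lam) {xstar x : m → ℝ} {ε : l → ℝ}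
    (hmin : ∀ y, tikhonov A W (A *ᵥ xstar + ε) lam x ≤ tikhonov A W (A *ᵥ xstar + ε) lam y) :
    (Q * Wsqrt) *ᵥ (x - xstar) ⬝ᵥ (Q * Wsqrt) *ᵥ (x - xstar)
      = ∑ k, √(ρ k) / (ρ k + lam) ^ 2 * (A *ᵥ ψ k ⬝ᵥ ε - lam * (ψ k ⬝ᵥ W *ᵥ xstar)) ^ 2 := by
  have hW : W.IsSymm := by rw [← hWs2, IsSymm, transpose_mul, hWs.posSemidef.isSymm.eq]
  rw [mulVec_dotProduct_mulVec, dotProduct_mulVec_eq_sum_of_eigen hW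
    (fun k => transpose_mul_self_mulVec_eq_sqrt_smul hWs hWs2 hQ hQ4 (hρ k) (heig k)) (hcomp _)]
  refine Finset.sum_congr rfl fun k _ => ?_
  rw [eq_div_of_mul_eq (by linarith [hρ k])
    ((mul_comm _ _).trans (mul_coeff_sub_eq_of_tikhonov_min hW (heig k) hmin)), div_pow]
  ring

end Tikhonov

section Noise

variable {Ω ι : Type*} [Fintype ι] {mΩ : MeasurableSpace Ω} {μ : Measure Ω} {e : ι → Ω → ℝ}

theorem memLp_dotProduct (hL2 : ∀ i, MemLp (e i) 2 μ) (g : ι → ℝ) :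
    MemLp (fun ω => g ⬝ᵥ fun i => e i ω) 2 μ :=
  memLp_finsetSum _ fun i _ => (hL2 i).const_mul (g i)

theorem integral_sq_dotProduct_sub_le [IsProbabilityMeasure μ]
    (hind : Pairwise fun i j => IndepFun (e i) (e j) μ) (hL2 : ∀ i, MemLp (e i) 2 μ)
    (hmean : ∀ i, ∫ ω, e i ω ∂μ = 0) {σ : ℝ} (hvar : ∀ i, ∫ ω, e i ω ^ 2 ∂μ ≤ σ ^ 2)
    (g : ι → ℝ) (c : ℝ) :
    ∫ ω, (g ⬝ᵥ (fun i => e i ω) - c) ^ 2 ∂μ ≤ σ ^ 2 * (g ⬝ᵥ g) + c ^ 2 := by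
  set Y := fun ω => g ⬝ᵥ fun i => e i ω
  have hY : Y = ∑ i, fun ω => g i * e i ω := by
    ext ω
    simp [Y, dotProduct]
  have hYL2 : MemLp Y 2 μ := memLp_dotProduct hL2 g
  have hEY : ∫ ω, Y ω ∂μ = 0 := by
    simp only [Y, dotProduct]
    rw [integral_finsetSum _ fun i _ => ((hL2 i).integrable one_le_two).const_mul (g i)]
    simp [integral_const_mul, hmean]
  have hVarY : Var[Y; μ] ≤ σ ^ 2 * (g ⬝ᵥ g) := by
    rw [hY, IndepFun.variance_sum (fun i _ => (hL2 i).const_mul (g i))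
      fun i _ j _ hij => (hind hij).comp (measurable_const_mul _) (measurable_const_mul _)]
    simp only [variance_const_mul, dotProduct, Finset.mul_sum]
    refine Finset.sum_le_sum fun i _ => ?_
    calc g i ^ 2 * Var[e i; μ] ≤ g i ^ 2 * σ ^ 2 := by
          gcongr
          exact (variance_le_expectation_sq (hL2 i).aestronglyMeasurable).trans (hvar i)
      _ = σ ^ 2 * (g i * g i) := by ring
  have hYc : MemLp (fun ω => Y ω - c) 2 μ := hYL2.sub (memLp_const c)
  have hsq : ∫ ω, (Y ω - c) ^ 2 ∂μ = Var[Y; μ] + c ^ 2 := by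
    have h := variance_eq_sub hYc
    rw [variance_sub_const hYL2.aestronglyMeasurable,
      integral_sub (hYL2.integrable one_le_two) (integrable_const c), hEY] at h
    simp only [integral_const, probReal_univ, smul_eq_mul, one_mul, zero_sub, neg_sq] at h
    rw [h]
    simp [Pi.pow_apply]
  rw [hsq]
  linarith

theorem integral_sum_mul_sq_dotProduct_sub_le [IsProbabilityMeasure μ]
    (hind : Pairwise fun i j => IndepFun (e i) (e j) μ) (hL2 : ∀ i, MemLp (e i) 2 μ)
    (hmean : ∀ i, ∫ ω, e i ω ∂μ = 0) {σ : ℝ} (hvar : ∀ i, ∫ ω, e i ω ^ 2 ∂μ ≤ σ ^ 2)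
    {κ : Type*} [Fintype κ] {w : κ → ℝ} (hw : ∀ k, 0 ≤ w k) (g : κ → ι → ℝ) (a : κ → ℝ) :
    ∫ ω, ∑ k, w k * (g k ⬝ᵥ (fun i => e i ω) - a k) ^ 2 ∂μ
      ≤ ∑ k, w k * (σ ^ 2 * (g k ⬝ᵥ g k) + a k ^ 2) := by
  have hint : ∀ k, Integrable (fun ω => w k * (g k ⬝ᵥ (fun i => e i ω) - a k) ^ 2) μ :=
    fun k => ((memLp_dotProduct hL2 (g k)).sub (memLp_const (a k))).integrable_sq.const_mul (w k)
  rw [integral_finsetSum _ fun k _ => hint k]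
  gcongr with k
  rw [integral_const_mul]
  exact mul_le_mul_of_nonneg_left
    (integral_sq_dotProduct_sub_le hind hL2 hmean hvar (g k) (a k)) (hw k)

end Noise

/-- Weak-norm expectation bound: with `B = (W^{-1/2}AᵀAW^{-1/2})^{1/4}W^{1/2}`,
`𝔼[(1/n)‖B(x_λ − x*)‖²] ≤ Cλ^{1/2}(1/n)‖x*‖_W² + Cσ²/(nλ^{1/2+1/α})`. -/
theorem stmt11 (C₀ α : ℝ) (hC₀ : 0 < C₀) (hα : 1 < α) :
    ∃ C > (0 : ℝ),
      ∀ (Ω : Type) (_ : MeasureSpace Ω), IsProbabilityMeasure (ℙ : Measure Ω) →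
      ∀ (n : ℕ), 0 < n →
      ∀ (A W : Matrix (Fin n) (Fin n) ℝ), W.PosDef →
      ∀ (ρ : Fin n → ℝ) (ψ : Fin n → (Fin n → ℝ)),
        (∀ k, 0 ≤ ρ k) →
        (∀ k, (Aᵀ * A).mulVec (ψ k) = ρ k • W.mulVec (ψ k)) →
        (∀ i j, ψ i ⬝ᵥ W.mulVec (ψ j) = if i = j then 1 else 0) →
        (∀ v : Fin n → ℝ, v = ∑ k, (ψ k ⬝ᵥ W.mulVec v) • ψ k) →
        (∀ k : Fin n, ρ k ≤ C₀ * ((k : ℝ) + 1) ^ (-α)) →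
      ∀ (Wsqrt : Matrix (Fin n) (Fin n) ℝ), Wsqrt.PosDef → Wsqrt * Wsqrt = W →
      ∀ (Q : Matrix (Fin n) (Fin n) ℝ), Q.PosSemidef →
        Q ^ 4 = Wsqrt⁻¹ * (Aᵀ * A) * Wsqrt⁻¹ →
      ∀ (e : Fin n → Ω → ℝ) (σ : ℝ), 0 ≤ σ →
        iIndepFun e ℙ →
        (∀ i, MemLp (e i) 2 ℙ) →
        (∀ i, ∫ ω, e i ω ∂ℙ = 0) →
        (∀ i, ∫ ω, (e i ω) ^ 2 ∂ℙ ≤ σ ^ 2) →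
      ∀ (lam : ℝ), 0 < lam →
      ∀ (xstar : Fin n → ℝ) (xlam : Ω → Fin n → ℝ),
        (∀ ω, ∀ x : Fin n → ℝ,
          (A.mulVec (xlam ω) - (A.mulVec xstar + fun i => e i ω)) ⬝ᵥ
              (A.mulVec (xlam ω) - (A.mulVec xstar + fun i => e i ω)) +
            lam * (xlam ω ⬝ᵥ W.mulVec (xlam ω)) ≤
          (A.mulVec x - (A.mulVec xstar + fun i => e i ω)) ⬝ᵥ
              (A.mulVec x - (A.mulVec xstar + fun i => e i ω)) +
            lam * (x ⬝ᵥ W.mulVec x)) →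
        ∫ ω, (1 / (n : ℝ)) *
            (((Q * Wsqrt).mulVec (xlam ω - xstar)) ⬝ᵥ ((Q * Wsqrt).mulVec (xlam ω - xstar))) ∂ℙ ≤
          C * lam ^ ((1 : ℝ) / 2) * ((1 / (n : ℝ)) * (xstar ⬝ᵥ W.mulVec xstar)) +
          C * σ ^ 2 / ((n : ℝ) * lam ^ (1 / 2 + 1 / α)) := by
  set K := (1 + 2 ^ (α * (3 / 2)) / (α * (3 / 2) - 1)) * C₀ ^ (1 / α)
  have hK : 0 ≤ K := mul_nonneg
    (add_nonneg zero_le_one (div_nonneg (by positivity) (by linarith))) (by positivity)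
  refine ⟨K + 1, by linarith, ?_⟩
  intro Ω _ _ n _ A W hW ρ ψ hρ heig horth hcomp hdecay Wsqrt hWs hWs2 Q hQ hQ4 e σ _ hind hL2
    hmean hvar lam hlam xstar xlam hmin
  set X := xstar ⬝ᵥ W *ᵥ xstar
  have hnorm : ∀ k, A *ᵥ ψ k ⬝ᵥ A *ᵥ ψ k = ρ k := fun k => by
    rw [mulVec_dotProduct_mulVec, heig, dotProduct_smul, horth, if_pos rfl, smul_eq_mul, mul_one]
  have hrisk : ∫ ω, (1 / (n : ℝ)) *
      ((Q * Wsqrt) *ᵥ (xlam ω - xstar) ⬝ᵥ (Q * Wsqrt) *ᵥ (xlam ω - xstar))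
      ≤ 1 / n * (σ ^ 2 * (K / lam ^ (1 / 2 + 1 / α)) + √lam / 2 * X) := by
    simp_rw [weak_norm_sq_sub_eq_of_tikhonov_min hWs hWs2 hQ hQ4 hρ heig hcomp hlam (hmin _),
      X, dotProduct_mulVec_self_eq_sum_sq hW.posSemidef.isSymm (hcomp xstar)]
    rw [integral_const_mul]
    gcongr
    refine (integral_sum_mul_sq_dotProduct_sub_le (fun i j hij => hind.indepFun hij) hL2 hmean
      hvar (fun k => by positivity) _ _).trans_eq ?_ |>.trans
      (sum_bias_variance_le (by linarith) hC₀ hlam hρ hdecay σ _)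
    simp only [hnorm]
  have hX : 0 ≤ X := by simpa using hW.posSemidef.dotProduct_mulVec_nonneg xstar
  calc _ ≤ 1 / n * (σ ^ 2 * (K / lam ^ (1 / 2 + 1 / α)) + √lam / 2 * X) := hrisk
    _ = K * (σ ^ 2 / (n * lam ^ (1 / 2 + 1 / α)))
        + 1 / 2 * (lam ^ ((1 : ℝ) / 2) * (1 / n * X)) := by
        rw [Real.sqrt_eq_rpow]
        ring
    _ ≤ (K + 1) * (σ ^ 2 / (n * lam ^ (1 / 2 + 1 / α)))
        + (K + 1) * (lam ^ ((1 : ℝ) / 2) * (1 / n * X)) := by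
        gcongr <;> linarith
    _ = _ := by ring
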